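/- Let d ≥ 2 and let S be an accessible closed subgroup of GL(d,ℝ). Then there exists a constant K > 0 such that for all lines u, v ∈ ℝP^{d−1} there is an element R ∈ S with ‖R‖ ≤ K and ‖R⁻¹‖ ≤ K mapping the line u onto the line v. -/

import Mathlib

open MeasureTheory Filter Topology
open scoped Matrix.Norms.L2Operator ENNReal

set_option maxHeartbeats 1000000

/-- The square real matrices of size `d`, endowed (via the scoped instances above) with the
operator norm coming from the Euclidean norm on `ℝ^d`. -/
abbrev Mat (d : ℕ) := Matrix (Fin d) (Fin d) ℝ

/-- `S` is a closed subgroup of `GL(d,ℝ)`: it consists of invertible matrices, contains the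
identity, is closed under multiplication and inversion, and is closed in the topology of
`GL(d,ℝ)` (identified with the units of the matrix algebra). -/
structure IsClosedMatSubgroup {d : ℕ} (S : Set (Mat d)) : Prop where
  one_mem : (1 : Mat d) ∈ S
  mul_mem : ∀ ⦃a b : Mat d⦄, a ∈ S → b ∈ S → a * b ∈ S
  isUnit_mem : ∀ ⦃a : Mat d⦄, a ∈ S → IsUnit a
  inv_mem : ∀ ⦃a : Mat d⦄, a ∈ S → a⁻¹ ∈ S
  closed : IsClosed {u : (Mat d)ˣ | (u : Mat d) ∈ S}

/-- `S` is accessible: it acts transitively on the projective space `ℝP^{d-1}`, i.e. any line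
through the origin can be mapped onto any other line by an element of `S`. -/
def Accessible {d : ℕ} (S : Set (Mat d)) : Prop :=
  ∀ u v : Fin d → ℝ, u ≠ 0 → v ≠ 0 → ∃ R ∈ S,
    (Submodule.span ℝ {u}).map (Matrix.mulVecLin R) = Submodule.span ℝ {v}

section Aux

variable {d : ℕ}

lemma map_span_singleton (R : Mat d) (u : Fin d → ℝ) :
    (Submodule.span ℝ {u}).map (Matrix.mulVecLin R) = Submodule.span ℝ {R.mulVec u} := by
  rw [Submodule.map_span, Set.image_singleton, Matrix.mulVecLin_apply]

lemma span_singleton_eq_of_mem {x v : Fin d → ℝ} (hx : x ≠ 0)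
    (h : x ∈ Submodule.span ℝ {v}) : Submodule.span ℝ {x} = Submodule.span ℝ {v} := by
  obtain ⟨c, rfl⟩ := Submodule.mem_span_singleton.1 h
  have hc : c ≠ 0 := by rintro rfl; simp at hx
  exact Submodule.span_singleton_smul_eq (IsUnit.mk0 c hc) v

lemma inv_mulVec_mulVec {R : Mat d} (hR : IsUnit R) (u : Fin d → ℝ) :
    R⁻¹.mulVec (R.mulVec u) = u := by
  rw [Matrix.mulVec_mulVec, Matrix.nonsing_inv_mul R ((Matrix.isUnit_iff_isUnit_det R).1 hR),
    Matrix.one_mulVec]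

lemma mulVec_ne_zero {R : Mat d} (hR : IsUnit R) {u : Fin d → ℝ} (hu : u ≠ 0) :
    R.mulVec u ≠ 0 := by
  intro h
  have h2 := inv_mulVec_mulVec hR u
  rw [h, Matrix.mulVec_zero] at h2
  exact hu h2.symm

end Aux

/-- If `S` is an accessible closed subgroup of `GL(d,ℝ)`, `d ≥ 2`, then there is
a constant `K > 0` such that any line `u` can be mapped onto any line `v` by some `R ∈ S` with
`‖R‖ ≤ K` and `‖R⁻¹‖ ≤ K`. -/
theorem stmt0 {d : ℕ} (hd : 2 ≤ d) (S : Set (Mat d)) (hS : IsClosedMatSubgroup S)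
    (hacc : Accessible S) :
    ∃ K > (0 : ℝ), ∀ u v : Fin d → ℝ, u ≠ 0 → v ≠ 0 → ∃ R ∈ S,
      ‖R‖ ≤ K ∧ ‖R⁻¹‖ ≤ K ∧
      (Submodule.span ℝ {u}).map (Matrix.mulVecLin R) = Submodule.span ℝ {v} := by
  classical
  have hd0 : 0 < d := by omega
  set i0 : Fin d := ⟨0, hd0⟩
  set v0 : Fin d → ℝ := Pi.single i0 1 with hv0def
  have hv0 : v0 ≠ 0 := by
    intro h
    have := congrFun h i0
    simp [hv0def] at this
  -- the unit sphere
  set sph : Set (Fin d → ℝ) := Metric.sphere (0 : Fin d → ℝ) 1 with hsphdef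
  have hnorm_sph : ∀ p : ↥sph, ‖(p : Fin d → ℝ)‖ = 1 := fun p =>
    mem_sphere_zero_iff_norm.mp p.2
  have hne_sph : ∀ p : ↥sph, (p : Fin d → ℝ) ≠ 0 := fun p => by
    intro h
    have := hnorm_sph p
    rw [h] at this; simp at this
  haveI : Nonempty ↥sph := by
    refine ⟨⟨v0, mem_sphere_zero_iff_norm.mpr ?_⟩⟩
    rw [hv0def, Pi.norm_single]
    simp
  haveI : CompleteSpace ↥sph := (Metric.isClosed_sphere).completeSpace_coe
  haveI : CompactSpace ↥sph := Metric.sphere.compactSpace _ _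
  -- the sets for the Baire argument
  set B : ℕ → Set ↥sph := fun n =>
    {p | ∃ R ∈ S, ‖R‖ ≤ (n : ℝ) ∧ ‖R⁻¹‖ ≤ (n : ℝ) ∧
      R.mulVec (p : Fin d → ℝ) ∈ Submodule.span ℝ {v0}} with hBdef
  have hspan_closed : IsClosed ((Submodule.span ℝ {v0} : Submodule ℝ (Fin d → ℝ)) : Set (Fin d → ℝ)) :=
    Submodule.closed_of_finiteDimensional _
  -- closedness of B n
  have hBclosed : ∀ n, IsClosed (B n) := by
    intro n
    refine IsSeqClosed.isClosed ?_
    intro x p hx hxp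
    choose R hRS hR1 hR2 hRspan using hx
    have hcomp : IsCompact ((Metric.closedBall (0 : Mat d) n) ×ˢ (Metric.closedBall (0 : Mat d) n)) :=
      (isCompact_closedBall _ _).prod (isCompact_closedBall _ _)
    have hmem : ∀ k, (R k, (R k)⁻¹) ∈
        (Metric.closedBall (0 : Mat d) n) ×ˢ (Metric.closedBall (0 : Mat d) n) := by
      intro k
      constructor <;> rw [Metric.mem_closedBall, dist_zero_right]
      · exact hR1 k
      · exact hR2 k
    obtain ⟨⟨A, Bm⟩, hABmem, φ, hφ, hconv⟩ := hcomp.tendsto_subseq hmem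
    have hA_t : Tendsto (fun k => R (φ k)) atTop (𝓝 A) :=
      (continuous_fst.tendsto _).comp hconv
    have hB_t : Tendsto (fun k => (R (φ k))⁻¹) atTop (𝓝 Bm) :=
      (continuous_snd.tendsto _).comp hconv
    have hunit : ∀ k, IsUnit (R k) := fun k => hS.isUnit_mem (hRS k)
    have hdet : ∀ k, IsUnit (R k).det := fun k => (Matrix.isUnit_iff_isUnit_det _).1 (hunit k)
    have hABone : A * Bm = 1 := by
      have h1 : Tendsto (fun k => R (φ k) * (R (φ k))⁻¹) atTop (𝓝 (A * Bm)) := hA_t.mul hB_t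
      have h2 : (fun k => R (φ k) * (R (φ k))⁻¹) = fun _ => (1 : Mat d) :=
        funext fun k => Matrix.mul_nonsing_inv _ (hdet _)
      rw [h2] at h1
      exact tendsto_nhds_unique h1 tendsto_const_nhds
    have hBAone : Bm * A = 1 := by
      have h1 : Tendsto (fun k => (R (φ k))⁻¹ * R (φ k)) atTop (𝓝 (Bm * A)) := hB_t.mul hA_t
      have h2 : (fun k => (R (φ k))⁻¹ * R (φ k)) = fun _ => (1 : Mat d) :=
        funext fun k => Matrix.nonsing_inv_mul _ (hdet _)
      rw [h2] at h1
      exact tendsto_nhds_unique h1 tendsto_const_nhds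
    set U : (Mat d)ˣ := ⟨A, Bm, hABone, hBAone⟩ with hUdef
    set Uk : ℕ → (Mat d)ˣ := fun k =>
      ⟨R (φ k), (R (φ k))⁻¹, Matrix.mul_nonsing_inv _ (hdet _),
        Matrix.nonsing_inv_mul _ (hdet _)⟩ with hUkdef
    have hUt : Tendsto Uk atTop (𝓝 U) := by
      rw [Units.isInducing_embedProduct.tendsto_nhds_iff]
      exact hA_t.prodMk_nhds ((MulOpposite.continuous_op.tendsto _).comp hB_t)
    have hA_S : A ∈ S := by
      have := hS.closed.mem_of_tendsto hUt (Eventually.of_forall fun k => hRS (φ k))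
      exact this
    have hx_t : Tendsto (fun k => (x (φ k) : Fin d → ℝ)) atTop (𝓝 (p : Fin d → ℝ)) :=
      (continuous_subtype_val.tendsto _).comp (hxp.comp hφ.tendsto_atTop)
    have hmul_t : Tendsto (fun k => (R (φ k)).mulVec (x (φ k) : Fin d → ℝ)) atTop
        (𝓝 (A.mulVec (p : Fin d → ℝ))) := by
      have hc : Continuous fun q : Mat d × (Fin d → ℝ) => q.1.mulVec q.2 :=
        Continuous.matrix_mulVec continuous_fst continuous_snd
      exact (hc.tendsto (A, (p : Fin d → ℝ))).comp (hA_t.prodMk_nhds hx_t)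
    have hmemspan : A.mulVec (p : Fin d → ℝ) ∈ Submodule.span ℝ {v0} :=
      hspan_closed.mem_of_tendsto hmul_t (Eventually.of_forall fun k => hRspan (φ k))
    refine ⟨A, hA_S, ?_, ?_, hmemspan⟩
    · have := hABmem.1
      rwa [Metric.mem_closedBall, dist_zero_right] at this
    · have hAinv : A⁻¹ = Bm := Matrix.inv_eq_right_inv hABone
      have := hABmem.2
      rwa [Metric.mem_closedBall, dist_zero_right, ← hAinv] at this
  -- the B n cover the sphere
  have hBcover : ⋃ n, B n = Set.univ := by
    ext p
    simp only [Set.mem_iUnion, Set.mem_univ, iff_true]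
    obtain ⟨R, hRS, hRmap⟩ := hacc (p : Fin d → ℝ) v0 (hne_sph p) hv0
    obtain ⟨n, hn1, hn2⟩ : ∃ n : ℕ, ‖R‖ ≤ (n : ℝ) ∧ ‖R⁻¹‖ ≤ (n : ℝ) := by
      obtain ⟨n, hn⟩ := exists_nat_ge (max ‖R‖ ‖R⁻¹‖)
      exact ⟨n, (le_max_left _ _).trans hn, (le_max_right _ _).trans hn⟩
    refine ⟨n, R, hRS, hn1, hn2, ?_⟩
    rw [map_span_singleton] at hRmap
    rw [← hRmap]
    exact Submodule.mem_span_singleton_self _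
  -- Baire
  obtain ⟨N, p1, hp1⟩ := nonempty_interior_of_iUnion_of_closed hBclosed hBcover
  -- the negation homeomorphism of the sphere
  have hnegmem : ∀ p : ↥sph, (-(p : Fin d → ℝ)) ∈ sph := by
    intro p
    refine mem_sphere_zero_iff_norm.mpr ?_
    rw [norm_neg]
    exact hnorm_sph p
  set negS : ↥sph ≃ₜ ↥sph :=
    { toFun := fun p => ⟨-(p : Fin d → ℝ), hnegmem p⟩
      invFun := fun p => ⟨-(p : Fin d → ℝ), hnegmem p⟩
      left_inv := fun p => Subtype.ext (neg_neg _)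
      right_inv := fun p => Subtype.ext (neg_neg _)
      continuous_toFun := (continuous_subtype_val.neg).subtype_mk _
      continuous_invFun := (continuous_subtype_val.neg).subtype_mk _ } with hnegSdef
  have hBsym : negS ⁻¹' (B N) = B N := by
    ext p
    simp only [hBdef, Set.mem_preimage, Set.mem_setOf_eq, hnegSdef, Homeomorph.homeomorph_mk_coe,
      Equiv.coe_fn_mk, Matrix.mulVec_neg]
    constructor
    · rintro ⟨R, h1, h2, h3, h4⟩
      exact ⟨R, h1, h2, h3, by simpa using (Submodule.span ℝ {v0}).neg_mem h4⟩
    · rintro ⟨R, h1, h2, h3, h4⟩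
      exact ⟨R, h1, h2, h3, (Submodule.span ℝ {v0}).neg_mem h4⟩
  have hnp1 : negS p1 ∈ interior (B N) := by
    have h1 : p1 ∈ interior (negS ⁻¹' (B N)) := by rw [hBsym]; exact hp1
    rw [← Homeomorph.preimage_interior] at h1
    exact h1
  -- for each q on the sphere, pick g q ∈ S moving q into the line of p1
  have hmove : ∀ q : ↥sph, ∃ g ∈ S, g.mulVec (q : Fin d → ℝ) ∈
      Submodule.span ℝ {(p1 : Fin d → ℝ)} := by
    intro q
    obtain ⟨g, hgS, hgmap⟩ := hacc (q : Fin d → ℝ) (p1 : Fin d → ℝ) (hne_sph q) (hne_sph p1)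
    refine ⟨g, hgS, ?_⟩
    rw [map_span_singleton] at hgmap
    rw [← hgmap]
    exact Submodule.mem_span_singleton_self _
  choose g hgS hgspan using hmove
  have hgunit : ∀ q, IsUnit (g q) := fun q => hS.isUnit_mem (hgS q)
  -- the normalization maps
  have hgvne : ∀ (q p : ↥sph), (g q).mulVec (p : Fin d → ℝ) ≠ 0 := fun q p =>
    mulVec_ne_zero (hgunit q) (hne_sph p)
  have hnormmem : ∀ (q p : ↥sph),
      (‖(g q).mulVec (p : Fin d → ℝ)‖⁻¹ • (g q).mulVec (p : Fin d → ℝ)) ∈ sph := by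
    intro q p
    refine mem_sphere_zero_iff_norm.mpr ?_
    rw [norm_smul, norm_inv, norm_norm]
    exact inv_mul_cancel₀ (norm_ne_zero_iff.2 (hgvne q p))
  set Φ : ↥sph → ↥sph → ↥sph := fun q p =>
    ⟨‖(g q).mulVec (p : Fin d → ℝ)‖⁻¹ • (g q).mulVec (p : Fin d → ℝ), hnormmem q p⟩ with hΦdef
  have hΦcont : ∀ q, Continuous (Φ q) := by
    intro q
    have hmv : Continuous fun p : ↥sph => (g q).mulVec (p : Fin d → ℝ) :=
      Continuous.matrix_mulVec continuous_const continuous_subtype_val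
    exact (((hmv.norm).inv₀ fun p => norm_ne_zero_iff.2 (hgvne q p)).smul hmv).subtype_mk _
  -- Φ q q is p1 or -p1, hence in the interior of B N
  have hΦq : ∀ q : ↥sph, Φ q q ∈ interior (B N) := by
    intro q
    obtain ⟨c, hc⟩ := Submodule.mem_span_singleton.1 (hgspan q)
    have hcne : c ≠ 0 := by
      rintro rfl
      rw [zero_smul] at hc
      exact hgvne q q hc.symm
    have hval : (Φ q q : Fin d → ℝ) = (|c|⁻¹ * c) • (p1 : Fin d → ℝ) := by
      rw [hΦdef]
      simp only
      rw [← hc, norm_smul, hnorm_sph p1, mul_one, Real.norm_eq_abs, smul_smul]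
    rcases lt_trichotomy c 0 with hlt | heq | hgt
    · have : Φ q q = negS p1 := by
        apply Subtype.ext
        rw [hval]
        have : |c|⁻¹ * c = -1 := by
          rw [abs_of_neg hlt]
          field_simp
        rw [this, hnegSdef]
        simp
      rw [this]; exact hnp1
    · exact absurd heq hcne
    · have : Φ q q = p1 := by
        apply Subtype.ext
        rw [hval]
        have : |c|⁻¹ * c = 1 := by
          rw [abs_of_pos hgt]
          field_simp
        rw [this, one_smul]
      rw [this]; exact hp1
  -- finite subcover
  have hcover2 : (Set.univ : Set ↥sph) ⊆ ⋃ q : ↥sph, (Φ q) ⁻¹' (interior (B N)) := by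
    intro p _
    exact Set.mem_iUnion.2 ⟨p, hΦq p⟩
  obtain ⟨t, ht⟩ := isCompact_univ.elim_finite_subcover
    (fun q : ↥sph => (Φ q) ⁻¹' (interior (B N)))
    (fun q => (isOpen_interior).preimage (hΦcont q)) hcover2
  obtain ⟨C, hC⟩ := Finset.exists_le (t.image fun q => max ‖g q‖ ‖(g q)⁻¹‖)
  set C' : ℝ := max C 1 with hC'def
  have hC'1 : (1 : ℝ) ≤ C' := le_max_right _ _
  have hC'g : ∀ q ∈ t, ‖g q‖ ≤ C' ∧ ‖(g q)⁻¹‖ ≤ C' := by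
    intro q hq
    have := hC _ (Finset.mem_image_of_mem _ hq)
    constructor
    · exact (le_max_left _ _).trans (this.trans (le_max_left _ _))
    · exact (le_max_right _ _).trans (this.trans (le_max_left _ _))
  set K0 : ℝ := ((N : ℝ) + 1) * C' with hK0def
  have hK0pos : 0 < K0 := by positivity
  have hK01 : 1 ≤ K0 := by
    rw [hK0def]
    nlinarith [Nat.cast_nonneg (α := ℝ) N]
  -- uniform statement: every sphere point maps into line of v0 with norm bound K0
  have huniform : ∀ p : ↥sph, ∃ T ∈ S, ‖T‖ ≤ K0 ∧ ‖T⁻¹‖ ≤ K0 ∧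
      T.mulVec (p : Fin d → ℝ) ∈ Submodule.span ℝ {v0} := by
    intro p
    obtain ⟨q, hqt, hpq⟩ : ∃ q ∈ t, p ∈ (Φ q) ⁻¹' (interior (B N)) := by
      have := ht (Set.mem_univ p)
      simpa using this
    have hΦmem : Φ q p ∈ B N := interior_subset hpq
    obtain ⟨R, hRS, hR1, hR2, hRspan⟩ := hΦmem
    set x : Fin d → ℝ := (g q).mulVec (p : Fin d → ℝ) with hxdef
    have hxne : x ≠ 0 := hgvne q p
    have hRx : R.mulVec x ∈ Submodule.span ℝ {v0} := by
      have h1 : R.mulVec ((Φ q p : ↥sph) : Fin d → ℝ) ∈ Submodule.span ℝ {v0} := hRspan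
      have h2 : ((Φ q p : ↥sph) : Fin d → ℝ) = ‖x‖⁻¹ • x := rfl
      rw [h2, Matrix.mulVec_smul] at h1
      have h3 := (Submodule.span ℝ {v0}).smul_mem ‖x‖ h1
      rwa [smul_smul, mul_inv_cancel₀ (norm_ne_zero_iff.2 hxne), one_smul] at h3
    refine ⟨R * g q, hS.mul_mem hRS (hgS q), ?_, ?_, ?_⟩
    · calc ‖R * g q‖ ≤ ‖R‖ * ‖g q‖ := norm_mul_le _ _
        _ ≤ ((N : ℝ) + 1) * C' := by
            apply mul_le_mul (hR1.trans (by linarith)) (hC'g q hqt).1 (norm_nonneg _)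
            positivity
    · rw [Matrix.mul_inv_rev]
      calc ‖(g q)⁻¹ * R⁻¹‖ ≤ ‖(g q)⁻¹‖ * ‖R⁻¹‖ := norm_mul_le _ _
        _ ≤ C' * ((N : ℝ) + 1) := by
            apply mul_le_mul (hC'g q hqt).2 (hR2.trans (by linarith)) (norm_nonneg _)
            positivity
        _ = ((N : ℝ) + 1) * C' := mul_comm _ _
    · rw [← Matrix.mulVec_mulVec]
      exact hRx
  -- conclude
  refine ⟨K0 * K0, by positivity, ?_⟩
  intro u v hu hv
  have hun : ‖u‖ ≠ 0 := norm_ne_zero_iff.2 hu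
  have hvn : ‖v‖ ≠ 0 := norm_ne_zero_iff.2 hv
  have hum : (‖u‖⁻¹ • u) ∈ sph := by
    refine mem_sphere_zero_iff_norm.mpr ?_
    rw [norm_smul, norm_inv, norm_norm]
    exact inv_mul_cancel₀ hun
  have hvm : (‖v‖⁻¹ • v) ∈ sph := by
    refine mem_sphere_zero_iff_norm.mpr ?_
    rw [norm_smul, norm_inv, norm_norm]
    exact inv_mul_cancel₀ hvn
  obtain ⟨Tu, hTuS, hTu1, hTu2, hTuspan⟩ := huniform ⟨‖u‖⁻¹ • u, hum⟩
  obtain ⟨Tv, hTvS, hTv1, hTv2, hTvspan⟩ := huniform ⟨‖v‖⁻¹ • v, hvm⟩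
  have hTuunit : IsUnit Tu := hS.isUnit_mem hTuS
  have hTvunit : IsUnit Tv := hS.isUnit_mem hTvS
  have hTuu : Tu.mulVec u ∈ Submodule.span ℝ {v0} := by
    have h1 : Tu.mulVec u = ‖u‖ • Tu.mulVec (‖u‖⁻¹ • u) := by
      rw [Matrix.mulVec_smul, smul_smul, mul_inv_cancel₀ hun, one_smul]
    rw [h1]
    exact (Submodule.span ℝ {v0}).smul_mem _ hTuspan
  have hTvv : Tv.mulVec v ∈ Submodule.span ℝ {v0} := by
    have h1 : Tv.mulVec v = ‖v‖ • Tv.mulVec (‖v‖⁻¹ • v) := by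
      rw [Matrix.mulVec_smul, smul_smul, mul_inv_cancel₀ hvn, one_smul]
    rw [h1]
    exact (Submodule.span ℝ {v0}).smul_mem _ hTvspan
  have hTuune : Tu.mulVec u ≠ 0 := mulVec_ne_zero hTuunit hu
  have hTvvne : Tv.mulVec v ≠ 0 := mulVec_ne_zero hTvunit hv
  have hspanv : Submodule.span ℝ {Tv.mulVec v} = Submodule.span ℝ {v0} :=
    span_singleton_eq_of_mem hTvvne hTvv
  have hmemTv : Tu.mulVec u ∈ Submodule.span ℝ {Tv.mulVec v} := by rw [hspanv]; exact hTuu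
  obtain ⟨c, hc⟩ := Submodule.mem_span_singleton.1 hmemTv
  have hcne : c ≠ 0 := by
    rintro rfl
    rw [zero_smul] at hc
    exact hTuune hc.symm
  refine ⟨Tv⁻¹ * Tu, hS.mul_mem (hS.inv_mem hTvS) hTuS, ?_, ?_, ?_⟩
  · calc ‖Tv⁻¹ * Tu‖ ≤ ‖Tv⁻¹‖ * ‖Tu‖ := norm_mul_le _ _
      _ ≤ K0 * K0 := mul_le_mul hTv2 hTu1 (norm_nonneg _) (le_of_lt hK0pos)
  · rw [Matrix.mul_inv_rev,
      Matrix.nonsing_inv_nonsing_inv Tv ((Matrix.isUnit_iff_isUnit_det Tv).1 hTvunit)]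
    calc ‖Tu⁻¹ * Tv‖ ≤ ‖Tu⁻¹‖ * ‖Tv‖ := norm_mul_le _ _
      _ ≤ K0 * K0 := mul_le_mul hTu2 hTv1 (norm_nonneg _) (le_of_lt hK0pos)
  · rw [map_span_singleton]
    have hRu : (Tv⁻¹ * Tu).mulVec u = c • v := by
      rw [← Matrix.mulVec_mulVec, ← hc, Matrix.mulVec_smul, inv_mulVec_mulVec hTvunit]
    rw [hRu]
    exact Submodule.span_singleton_smul_eq (IsUnit.mk0 c hcne) v
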